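/- Consider the system (∂_t² − c_l²Δ)u^l = Σ_{i,j} Σ_{α,β,γ=0}^{3} G^{l,αβγ}_{ij} (∂_α u^i) ∂²_{βγ} u^j + Σ_{i,j} Σ_{α,β=0}^{3} H^{l,αβ}_{ij} (∂_α u^i) ∂_β u^j (l = 1,…,N) on (0,T) × ℝ³, with c_l > 0 and real constant coefficients. Then there exists ε* > 0, depending only on the speeds c_1,…,c_N and the coefficients G, H, with the following property: whenever u = (u^1,…,u^N) is a smooth solution of this system and (t,x) is a point at which max{ |Z̄^a ∂_α u^i(t,x)| : |a| ≤ 1, 0 ≤ α ≤ 3, 1 ≤ i ≤ N } ≤ ε*, then for every multi-index a with |a| ∈ {1,2}: Σ_{i=1}^N |Z̄^a ∂_t² u^i(t,x)| ≤ C Σ_{i=1}^N Σ_{1≤|b|≤|a|} ( Σ_{1≤m≤3, 0≤α≤3} |Z̄^b ∂_m ∂_α u^i(t,x)| + Σ_{α=0}^{3} |Z̄^b ∂_α u^i(t,x)| ), where C depends only on the speeds and the coefficients. -/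

import Mathlib

open MeasureTheory Real Set
open scoped ENNReal NNReal

noncomputable section

/-- Euclidean space ℝⁿ. -/
abbrev Esp (n : ℕ) := EuclideanSpace ℝ (Fin n)

/-- Time derivative ∂_t of a function of (t, x). -/
def dt' {n : ℕ} (f : ℝ → Esp n → ℝ) : ℝ → Esp n → ℝ :=
  fun t x => deriv (fun s => f s x) t

/-- Spatial partial derivative ∂_j of a function of (t, x). -/
def dx' {n : ℕ} (j : Fin n) (f : ℝ → Esp n → ℝ) : ℝ → Esp n → ℝ :=
  fun t x => fderiv ℝ (fun y => f t y) x (EuclideanSpace.single j 1)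

/-- ∂_α for α : Fin (n+1); α = 0 is the time derivative, α = j+1 is ∂_j. -/
def pd' {n : ℕ} (α : Fin (n + 1)) (f : ℝ → Esp n → ℝ) : ℝ → Esp n → ℝ :=
  Fin.cases (dt' f) (fun j => dx' j f) α

/-- Rotation generator Ω_{ij} = x_i ∂_j − x_j ∂_i. -/
def rot' {n : ℕ} (i j : Fin n) (f : ℝ → Esp n → ℝ) : ℝ → Esp n → ℝ :=
  fun t x => x i * dx' j f t x - x j * dx' i f t x

/-- Scaling operator S = t ∂_t + x · ∇. -/
def scl' {n : ℕ} (f : ℝ → Esp n → ℝ) : ℝ → Esp n → ℝ :=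
  fun t x => t * dt' f t x + ∑ j, x j * dx' j f t x

/-- Japanese bracket ⟨a⟩ = √(1 + a²). -/
def jap (a : ℝ) : ℝ := Real.sqrt (1 + a ^ 2)

/-- L² norm over ℝⁿ. -/
def L2n {n : ℕ} (g : Esp n → ℝ) : ℝ := Real.sqrt (∫ x, (g x) ^ 2)

/-- Lᵖ norm over ℝⁿ (p finite). -/
def Lpn {n : ℕ} (p : ℝ) (g : Esp n → ℝ) : ℝ := (∫ x, |g x| ^ p) ^ (1 / p)

/-- Energy E₁(v(t)) for speeds c. -/
def E1 {n N : ℕ} (c : Fin N → ℝ) (v : Fin N → ℝ → Esp n → ℝ) (t : ℝ) : ℝ :=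
  (1 / 2) * ∑ l, ∫ x, ((dt' (v l) t x) ^ 2 + (c l) ^ 2 * ∑ j, (dx' j (v l) t x) ^ 2)

/-- N₁(v(t)) = √E₁(v(t)). -/
def N1 {n N : ℕ} (c : Fin N → ℝ) (v : Fin N → ℝ → Esp n → ℝ) (t : ℝ) : ℝ :=
  Real.sqrt (E1 c v t)

/-- M₂(v(t)) = Σ_l Σ_{δ,j} ‖⟨c_l t − |x|⟩ ∂_δ ∂_j v^l(t)‖_{L²}. -/
def M2 {n N : ℕ} (c : Fin N → ℝ) (v : Fin N → ℝ → Esp n → ℝ) (t : ℝ) : ℝ :=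
  ∑ l, ∑ δ : Fin (n + 1), ∑ j : Fin n,
    L2n (fun x => jap (c l * t - ‖x‖) * pd' δ (dx' j (v l)) t x)

/-- Smoothness of all components of v, jointly in (t, x), for t in s. -/
def SmoothSTOn {n N : ℕ} (v : Fin N → ℝ → Esp n → ℝ) (s : Set ℝ) : Prop :=
  ∀ l, ContDiffOn ℝ (⊤ : ℕ∞) (fun p : ℝ × Esp n => v l p.1 p.2) (s ×ˢ (univ : Set (Esp n)))

/-- Compact support in x at each fixed time t ∈ s. -/
def CompactSupp {n N : ℕ} (v : Fin N → ℝ → Esp n → ℝ) (s : Set ℝ) : Prop :=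
  ∀ l, ∀ t ∈ s, HasCompactSupport (fun x => v l t x)

/-- Spherical Lᵖ norm of g on the sphere of radius r (w.r.t. the surface
measure on the unit sphere), i.e. ‖g(r·)‖_{L^p_ω(S^{n-1})}. -/
def sphLp {n : ℕ} (p : ℝ) (g : Esp n → ℝ) (r : ℝ) : ℝ :=
  (∫ ω : Metric.sphere (0 : Esp n) 1,
      |g (r • (ω : Esp n))| ^ p ∂((volume : Measure (Esp n)).toSphere)) ^ (1 / p)

/-- A single generator from Z̄ = {∂_j, Ω_{ij}} : either a spatial derivative or
a rotation. -/
def zg {n : ℕ} (g : Fin n ⊕ (Fin n × Fin n)) (f : ℝ → Esp n → ℝ) : ℝ → Esp n → ℝ :=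
  match g with
  | Sum.inl j => dx' j f
  | Sum.inr q => rot' q.1 q.2 f

/-- The wave operator ∂_t² − c²Δ. -/
def boxOp {n : ℕ} (cl : ℝ) (f : ℝ → Esp n → ℝ) : ℝ → Esp n → ℝ :=
  fun t x => dt' (dt' f) t x - cl ^ 2 * ∑ j, dx' j (dx' j f) t x

/-- u is a solution on (0,T) × ℝ³ of the quadratic quasi-linear system
(∂_t² − c_l²Δ)u^l = G^{l,αβγ}_{ij} (∂_α u^i) ∂²_{βγ} u^j + H^{l,αβ}_{ij} (∂_α u^i) ∂_β u^j. -/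
def IsSol3 {N : ℕ} (c : Fin N → ℝ)
    (G : Fin N → Fin N → Fin N → Fin 4 → Fin 4 → Fin 4 → ℝ)
    (H : Fin N → Fin N → Fin N → Fin 4 → Fin 4 → ℝ)
    (T : ℝ) (u : Fin N → ℝ → Esp 3 → ℝ) : Prop :=
  ∀ l, ∀ t ∈ Ioo (0 : ℝ) T, ∀ x,
    boxOp (c l) (u l) t x =
      (∑ i, ∑ j, ∑ α, ∑ β, ∑ γ,
        G l i j α β γ * pd' α (u i) t x * pd' β (pd' γ (u j)) t x)
      + ∑ i, ∑ j, ∑ α, ∑ β, H l i j α β * pd' α (u i) t x * pd' β (u j) t x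

/-!
Applying `Z̄^a` to the equation writes `Z̄^a ∂_t² u^l` as `c_l² Z̄^a Δu^l` plus `Z̄^a` of the
quadratic terms, expanded by the Leibniz rule. Every second derivative except `∂_t² u` contains a
spatial derivative and, since `∂_t` commutes with `∂_m`, is part of the right-hand side; `∂_t² u`
itself only appears multiplied by a first derivative `∂_α u`, which is at most `ε`. With `K`
bounding the speeds and coefficients and `ε = 1/(8K)`, these terms are absorbed into the left
side: first for `|a| = 0`, which gives `|∂_t² u| ≤ 1`, then for `|a| = 1` and `|a| = 2`.
-/

open Function

abbrev Generator (n : ℕ) := Fin n ⊕ (Fin n × Fin n)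

section Calculus

variable {n : ℕ} {f g : ℝ → Esp n → ℝ} {t : ℝ} {x : Esp n}

lemma dt'_eq_fderiv (hf : DifferentiableAt ℝ (uncurry f) (t, x)) :
    dt' f t x = fderiv ℝ (uncurry f) (t, x) (1, 0) := by
  have hline : HasDerivAt (fun s : ℝ => (s, x)) ((1 : ℝ), (0 : Esp n)) t :=
    (hasDerivAt_id t).prodMk (hasDerivAt_const t x)
  exact (hf.hasFDerivAt.comp_hasDerivAt t hline).deriv

lemma dx'_eq_fderiv (j : Fin n) (hf : DifferentiableAt ℝ (uncurry f) (t, x)) :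
    dx' j f t x = fderiv ℝ (uncurry f) (t, x) (0, EuclideanSpace.single j 1) := by
  have hslice : HasFDerivAt (fun y : Esp n => (t, y))
      ((0 : Esp n →L[ℝ] ℝ).prod (ContinuousLinearMap.id ℝ (Esp n))) x :=
    (hasFDerivAt_const t x).prodMk (hasFDerivAt_id x)
  have hcomp : HasFDerivAt (fun y => f t y) _ x := hf.hasFDerivAt.comp x hslice
  rw [dx', hcomp.fderiv]
  simp

lemma DifferentiableAt.slice (hf : DifferentiableAt ℝ (uncurry f) (t, x)) :
    DifferentiableAt ℝ (fun y => f t y) x :=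
  hf.comp x ((differentiableAt_const t).prodMk differentiableAt_id)

def genField : Generator n → Esp n → Esp n
  | .inl j, _ => EuclideanSpace.single j 1
  | .inr (i, j), x => x i • EuclideanSpace.single j 1 - x j • EuclideanSpace.single i 1

lemma zg_eq_fderiv (a : Generator n) :
    zg a f t x = fderiv ℝ (fun y => f t y) x (genField a x) := by
  rcases a with j | ⟨i, j⟩
  · rfl
  · simp [zg, rot', dx', genField, map_sub, map_smul]

lemma zg_add (a : Generator n) (hf : DifferentiableAt ℝ (fun y => f t y) x)
    (hg : DifferentiableAt ℝ (fun y => g t y) x) :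
    zg a (fun t y => f t y + g t y) t x = zg a f t x + zg a g t x := by
  simp only [zg_eq_fderiv, fderiv_fun_add hf hg]
  rfl

lemma zg_mul (a : Generator n) (hf : DifferentiableAt ℝ (fun y => f t y) x)
    (hg : DifferentiableAt ℝ (fun y => g t y) x) :
    zg a (fun t y => f t y * g t y) t x = zg a f t x * g t x + f t x * zg a g t x := by
  simp only [zg_eq_fderiv, fderiv_fun_mul hf hg]
  simp
  ring

lemma zg_sum_mul {ι : Type*} [Fintype ι] (a : Generator n) (k : ι → ℝ)
    {F : ι → ℝ → Esp n → ℝ} (hF : ∀ i, DifferentiableAt ℝ (fun y => F i t y) x) :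
    zg a (fun t y => ∑ i, k i * F i t y) t x = ∑ i, k i * zg a (F i) t x := by
  simp only [zg_eq_fderiv]
  rw [fderiv_fun_sum fun i _ => (hF i).const_mul (k i)]
  simp [fderiv_const_mul (hF _)]

lemma zg_congr (a : Generator n) (h : ∀ y, f t y = g t y) :
    zg a f t x = zg a g t x := by
  simp only [zg_eq_fderiv, show (fun y => f t y) = fun y => g t y from funext h]

end Calculus

section Smoothness

variable {n : ℕ} {Ω : Set (ℝ × Esp n)} {f g : ℝ → Esp n → ℝ} {t : ℝ} {x : Esp n}

def JointSmoothOn (f : ℝ → Esp n → ℝ) (Ω : Set (ℝ × Esp n)) : Prop :=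
  ContDiffOn ℝ (⊤ : ℕ∞) (uncurry f) Ω

namespace JointSmoothOn

lemma differentiableAt (hf : JointSmoothOn f Ω) (hΩ : IsOpen Ω) {p : ℝ × Esp n}
    (hp : p ∈ Ω) : DifferentiableAt ℝ (uncurry f) p :=
  (hf.contDiffAt (hΩ.mem_nhds hp)).differentiableAt (by simp)

lemma differentiableAt_slice (hf : JointSmoothOn f Ω) (hΩ : IsOpen Ω) (hp : (t, x) ∈ Ω) :
    DifferentiableAt ℝ (fun y => f t y) x :=
  (hf.differentiableAt hΩ hp).slice

lemma contDiffOn_fderiv (hf : JointSmoothOn f Ω) (hΩ : IsOpen Ω) :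
    ContDiffOn ℝ (⊤ : ℕ∞) (fderiv ℝ (uncurry f)) Ω :=
  hf.fderiv_of_isOpen hΩ (by exact_mod_cast le_top)

lemma contDiffOn_fderiv_apply (hf : JointSmoothOn f Ω) (hΩ : IsOpen Ω) (v : ℝ × Esp n) :
    ContDiffOn ℝ (⊤ : ℕ∞) (fun p => fderiv ℝ (uncurry f) p v) Ω :=
  (hf.contDiffOn_fderiv hΩ).clm_apply contDiffOn_const

lemma dt' (hf : JointSmoothOn f Ω) (hΩ : IsOpen Ω) : JointSmoothOn (dt' f) Ω :=
  (hf.contDiffOn_fderiv_apply hΩ (1, 0)).congr fun p hp =>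
    dt'_eq_fderiv (hf.differentiableAt hΩ (p := (p.1, p.2)) hp)

lemma dx' (hf : JointSmoothOn f Ω) (hΩ : IsOpen Ω) (j : Fin n) : JointSmoothOn (dx' j f) Ω :=
  (hf.contDiffOn_fderiv_apply hΩ (0, EuclideanSpace.single j 1)).congr fun p hp =>
    dx'_eq_fderiv j (hf.differentiableAt hΩ (p := (p.1, p.2)) hp)

lemma pd' (hf : JointSmoothOn f Ω) (hΩ : IsOpen Ω) (α : Fin (n + 1)) :
    JointSmoothOn (pd' α f) Ω := by
  cases α using Fin.cases with
  | zero => exact hf.dt' hΩ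
  | succ j => exact hf.dx' hΩ j

lemma mul (hf : JointSmoothOn f Ω) (hg : JointSmoothOn g Ω) :
    JointSmoothOn (fun t x => f t x * g t x) Ω :=
  ContDiffOn.mul hf hg

lemma add (hf : JointSmoothOn f Ω) (hg : JointSmoothOn g Ω) :
    JointSmoothOn (fun t x => f t x + g t x) Ω :=
  ContDiffOn.add hf hg

lemma zg (hf : JointSmoothOn f Ω) (hΩ : IsOpen Ω) (a : Generator n) :
    JointSmoothOn (zg a f) Ω := by
  have hcoord (i : Fin n) : ContDiff ℝ (⊤ : ℕ∞) (fun p : ℝ × Esp n => p.2 i) :=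
    ((EuclideanSpace.proj i : Esp n →L[ℝ] ℝ).contDiff.comp (contDiff_snd (E := ℝ)) :)
  rcases a with j | ⟨i, j⟩
  · exact hf.dx' hΩ j
  · exact ((hcoord i).contDiffOn.mul (hf.dx' hΩ j)).sub ((hcoord j).contDiffOn.mul (hf.dx' hΩ i))

lemma sum_mul {ι : Type*} [Fintype ι] (k : ι → ℝ) {F : ι → ℝ → Esp n → ℝ}
    (hF : ∀ i, JointSmoothOn (F i) Ω) :
    JointSmoothOn (fun t x => ∑ i, k i * F i t x) Ω :=
  ContDiffOn.sum fun i _ => contDiffOn_const.mul (hF i)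

end JointSmoothOn

lemma SmoothSTOn.jointSmoothOn {N : ℕ} {u : Fin N → ℝ → Esp n → ℝ} {s : Set ℝ}
    (hu : SmoothSTOn u s) (i : Fin N) : JointSmoothOn (u i) (s ×ˢ univ) :=
  hu i

lemma dt'_dx'_comm (hf : JointSmoothOn f Ω) (hΩ : IsOpen Ω) (j : Fin n) (hp : (t, x) ∈ Ω) :
    dt' (dx' j f) t x = dx' j (dt' f) t x := by
  set D := fderiv ℝ (uncurry f)
  have hD : DifferentiableAt ℝ D (t, x) :=
    ((hf.contDiffOn_fderiv hΩ).contDiffAt (hΩ.mem_nhds hp)).differentiableAt (by simp)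
  have hdir (v w : ℝ × Esp n) :
      fderiv ℝ (fun p => D p v) (t, x) w = fderiv ℝ D (t, x) w v := by
    rw [fderiv_clm_apply hD (differentiableAt_const v)]
    simp
  have hnear {g : ℝ → Esp n → ℝ} (v : ℝ × Esp n)
      (hg : ∀ p ∈ Ω, g p.1 p.2 = D p v) : uncurry g =ᶠ[nhds (t, x)] fun p => D p v :=
    Filter.mem_of_superset (hΩ.mem_nhds hp) hg
  have hsymm : IsSymmSndFDerivAt ℝ (uncurry f) (t, x) :=
    (hf.contDiffAt (hΩ.mem_nhds hp)).isSymmSndFDerivAt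
      (by simpa using WithTop.coe_le_coe.mpr (le_top : (2 : ℕ∞) ≤ ⊤))
  rw [dt'_eq_fderiv ((hf.dx' hΩ j).differentiableAt hΩ hp),
    dx'_eq_fderiv j ((hf.dt' hΩ).differentiableAt hΩ hp),
    (hnear _ fun p hp => dx'_eq_fderiv j (hf.differentiableAt hΩ hp)).fderiv_eq,
    (hnear _ fun p hp => dt'_eq_fderiv (hf.differentiableAt hΩ hp)).fderiv_eq, hdir, hdir]
  exact hsymm _ _

end Smoothness

section Iterated

variable {n : ℕ} {Ω : Set (ℝ × Esp n)} {f g : ℝ → Esp n → ℝ} {t : ℝ} {x : Esp n}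

def zgs (w : List (Generator n)) (f : ℝ → Esp n → ℝ) : ℝ → Esp n → ℝ :=
  w.foldr zg f

@[simp] lemma zgs_nil : zgs [] f = f := rfl

@[simp] lemma zgs_cons (a : Generator n) (w : List (Generator n)) :
    zgs (a :: w) f = zg a (zgs w f) := rfl

lemma JointSmoothOn.zgs (hf : JointSmoothOn f Ω) (hΩ : IsOpen Ω)
    (w : List (Generator n)) : JointSmoothOn (zgs w f) Ω := by
  induction w with
  | nil => exact hf
  | cons a w ih => exact ih.zg hΩ a

lemma zgs_congr (w : List (Generator n)) (h : ∀ y, f t y = g t y) :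
    zgs w f t x = zgs w g t x := by
  induction w generalizing x with
  | nil => exact h x
  | cons a w ih => exact zg_congr a fun y => ih

lemma zgs_add (hf : JointSmoothOn f Ω) (hg : JointSmoothOn g Ω) (hΩ : IsOpen Ω)
    (hslice : ∀ y, (t, y) ∈ Ω) (w : List (Generator n)) :
    zgs w (fun t y => f t y + g t y) t x = zgs w f t x + zgs w g t x := by
  induction w generalizing x with
  | nil => rfl
  | cons a w ih =>
    rw [zgs_cons, zg_congr a (g := fun t y => zgs w f t y + zgs w g t y) fun y => ih, zg_add a
      ((hf.zgs hΩ w).differentiableAt_slice hΩ (hslice x))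
      ((hg.zgs hΩ w).differentiableAt_slice hΩ (hslice x))]
    rfl

lemma zgs_sum_mul {ι : Type*} [Fintype ι] (k : ι → ℝ) {F : ι → ℝ → Esp n → ℝ}
    (hF : ∀ i, JointSmoothOn (F i) Ω) (hΩ : IsOpen Ω) (hslice : ∀ y, (t, y) ∈ Ω)
    (w : List (Generator n)) :
    zgs w (fun t y => ∑ i, k i * F i t y) t x = ∑ i, k i * zgs w (F i) t x := by
  induction w generalizing x with
  | nil => rfl
  | cons a w ih =>
    rw [zgs_cons, zg_congr a (g := fun t y => ∑ i, k i * zgs w (F i) t y) fun y => ih,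
      zg_sum_mul a k fun i => ((hF i).zgs hΩ w).differentiableAt_slice hΩ (hslice x)]
    rfl

lemma zg_zg_mul (hf : JointSmoothOn f Ω) (hg : JointSmoothOn g Ω) (hΩ : IsOpen Ω)
    (hslice : ∀ y, (t, y) ∈ Ω) (a b : Generator n) :
    zg a (zg b (fun t y => f t y * g t y)) t x
      = zg a (zg b f) t x * g t x + zg b f t x * zg a g t x
        + (zg a f t x * zg b g t x + f t x * zg a (zg b g) t x) := by
  have hd {h : ℝ → Esp n → ℝ} (hh : JointSmoothOn h Ω) (y : Esp n) :
      DifferentiableAt ℝ (fun z => h t z) y := hh.differentiableAt_slice hΩ (hslice y)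
  rw [zg_congr a (g := fun t y => zg b f t y * g t y + f t y * zg b g t y)
      fun y => zg_mul b (hd hf y) (hd hg y),
    zg_add a ((hd (hf.zg hΩ b) x).mul (hd hg x)) ((hd hf x).mul (hd (hg.zg hΩ b) x)),
    zg_mul a (hd (hf.zg hΩ b) x) (hd hg x), zg_mul a (hd hf x) (hd (hg.zg hΩ b) x)]

lemma abs_zg_mul_le (a : Generator n) (hf : DifferentiableAt ℝ (fun y => f t y) x)
    (hg : DifferentiableAt ℝ (fun y => g t y) x) :
    |zg a (fun t y => f t y * g t y) t x| ≤ |zg a f t x| * |g t x| + |f t x| * |zg a g t x| := by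
  rw [zg_mul a hf hg, ← abs_mul, ← abs_mul]
  exact abs_add_le _ _

lemma abs_zg_zg_mul_le (hf : JointSmoothOn f Ω) (hg : JointSmoothOn g Ω) (hΩ : IsOpen Ω)
    (hslice : ∀ y, (t, y) ∈ Ω) (a b : Generator n) :
    |zg a (zg b (fun t y => f t y * g t y)) t x|
      ≤ |zg a (zg b f) t x| * |g t x| + |zg b f t x| * |zg a g t x|
        + (|zg a f t x| * |zg b g t x| + |f t x| * |zg a (zg b g) t x|) := by
  simp only [zg_zg_mul hf hg hΩ hslice, ← abs_mul]
  exact (abs_add_le _ _).trans (add_le_add (abs_add_le _ _) (abs_add_le _ _))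

lemma abs_zgs_pd'_pd'_le (hf : JointSmoothOn f Ω) (hΩ : IsOpen Ω) (hslice : ∀ y, (t, y) ∈ Ω)
    (w : List (Generator n)) (β γ : Fin (n + 1)) {M : ℝ} (hM0 : 0 ≤ M)
    (hM : ∀ m α, |zgs w (dx' m (pd' α f)) t x| ≤ M) :
    |zgs w (pd' β (pd' γ f)) t x| ≤ M + |zgs w (dt' (dt' f)) t x| := by
  cases β using Fin.cases with
  | zero =>
    cases γ using Fin.cases with
    | zero => exact le_add_of_nonneg_left hM0
    | succ m =>
      have hcomm : zgs w (dt' (dx' m f)) t x = zgs w (dx' m (dt' f)) t x :=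
        zgs_congr w fun y => dt'_dx'_comm hf hΩ m (hslice y)
      simp only [pd', Fin.cases_zero, Fin.cases_succ, hcomm]
      exact le_add_of_le_of_nonneg (hM m 0) (abs_nonneg _)
  | succ m => exact le_add_of_le_of_nonneg (hM m γ) (abs_nonneg _)

end Iterated

lemma abs_sum_mul_le {ι : Type*} [Fintype ι] (k F : ι → ℝ) {b : ℝ}
    (hF : ∀ i, |F i| ≤ b) : |∑ i, k i * F i| ≤ (∑ i, |k i|) * b := by
  rw [Finset.sum_mul]
  refine (Finset.abs_sum_le_sum_abs _ _).trans (Finset.sum_le_sum fun i _ => ?_)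
  rw [abs_mul]
  exact mul_le_mul_of_nonneg_left (hF i) (abs_nonneg _)

section PointwiseSums

variable {n N : ℕ} (u : Fin N → ℝ → Esp n → ℝ) (w : List (Generator n))
  (t : ℝ) (x : Esp n)

def firstOrderSum : ℝ := ∑ i, ∑ α : Fin (n + 1), |zgs w (pd' α (u i)) t x|

def spatialSecondOrderSum : ℝ :=
  ∑ i, ∑ m : Fin n, ∑ α : Fin (n + 1), |zgs w (dx' m (pd' α (u i))) t x|

def timeSecondOrderSum : ℝ := ∑ i, |zgs w (dt' (dt' (u i))) t x|

def IsSmallAt (ε : ℝ) : Prop :=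
  (∀ i α, |pd' α (u i) t x| ≤ ε) ∧ ∀ i α a, |zg a (pd' α (u i)) t x| ≤ ε

lemma firstOrderSum_nonneg : 0 ≤ firstOrderSum u w t x := by
  unfold firstOrderSum; positivity

lemma spatialSecondOrderSum_nonneg : 0 ≤ spatialSecondOrderSum u w t x := by
  unfold spatialSecondOrderSum; positivity

lemma timeSecondOrderSum_nonneg : 0 ≤ timeSecondOrderSum u w t x := by
  unfold timeSecondOrderSum; positivity

variable {u w t x}

lemma abs_le_firstOrderSum (i : Fin N) (α : Fin (n + 1)) :
    |zgs w (pd' α (u i)) t x| ≤ firstOrderSum u w t x :=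
  (Finset.single_le_sum (fun α _ => abs_nonneg _) (Finset.mem_univ α)).trans
    (Finset.single_le_sum (f := fun i => ∑ α : Fin (n + 1), |zgs w (pd' α (u i)) t x|)
      (fun _ _ => by positivity) (Finset.mem_univ i))

lemma abs_le_spatialSecondOrderSum (i : Fin N) (m : Fin n) (α : Fin (n + 1)) :
    |zgs w (dx' m (pd' α (u i))) t x| ≤ spatialSecondOrderSum u w t x :=
  ((Finset.single_le_sum (fun α _ => abs_nonneg _) (Finset.mem_univ α)).trans
    (Finset.single_le_sum (f := fun m => ∑ α : Fin (n + 1), |zgs w (dx' m (pd' α (u i))) t x|)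
      (fun _ _ => by positivity) (Finset.mem_univ m))).trans
    (Finset.single_le_sum
      (f := fun i => ∑ m : Fin n, ∑ α : Fin (n + 1), |zgs w (dx' m (pd' α (u i))) t x|)
      (fun _ _ => by positivity) (Finset.mem_univ i))

lemma abs_le_timeSecondOrderSum (i : Fin N) :
    |zgs w (dt' (dt' (u i))) t x| ≤ timeSecondOrderSum u w t x :=
  Finset.single_le_sum (f := fun i => |zgs w (dt' (dt' (u i))) t x|)
    (fun _ _ => abs_nonneg _) (Finset.mem_univ i)

lemma abs_zgs_pd'_pd'_le_sum {Ω : Set (ℝ × Esp n)} (hu : ∀ i, JointSmoothOn (u i) Ω)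
    (hΩ : IsOpen Ω) (hslice : ∀ y, (t, y) ∈ Ω) (j : Fin N) (β γ : Fin (n + 1)) :
    |zgs w (pd' β (pd' γ (u j))) t x|
      ≤ spatialSecondOrderSum u w t x + timeSecondOrderSum u w t x :=
  (abs_zgs_pd'_pd'_le (hu j) hΩ hslice w β γ (spatialSecondOrderSum_nonneg u w t x)
    fun m α => abs_le_spatialSecondOrderSum j m α).trans
    (add_le_add_right (abs_le_timeSecondOrderSum j) _)

end PointwiseSums

section System

variable {N : ℕ}

abbrev QuasiIdx (N : ℕ) := Fin N × Fin N × Fin 4 × Fin 4 × Fin 4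

abbrev SemiIdx (N : ℕ) := Fin N × Fin N × Fin 4 × Fin 4

def quasiCoeff (G : Fin N → Fin N → Fin N → Fin 4 → Fin 4 → Fin 4 → ℝ) (l : Fin N) :
    QuasiIdx N → ℝ
  | (i, j, α, β, γ) => G l i j α β γ

def semiCoeff (H : Fin N → Fin N → Fin N → Fin 4 → Fin 4 → ℝ) (l : Fin N) :
    SemiIdx N → ℝ
  | (i, j, α, β) => H l i j α β

def quasiTerm (u : Fin N → ℝ → Esp 3 → ℝ) : QuasiIdx N → ℝ → Esp 3 → ℝ
  | (i, j, α, β, γ) => fun t x => pd' α (u i) t x * pd' β (pd' γ (u j)) t x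

def semiTerm (u : Fin N → ℝ → Esp 3 → ℝ) : SemiIdx N → ℝ → Esp 3 → ℝ
  | (i, j, α, β) => fun t x => pd' α (u i) t x * pd' β (u j) t x

def coeffBound (c : Fin N → ℝ)
    (G : Fin N → Fin N → Fin N → Fin 4 → Fin 4 → Fin 4 → ℝ)
    (H : Fin N → Fin N → Fin N → Fin 4 → Fin 4 → ℝ) : ℝ :=
  1 + ∑ l, (c l ^ 2 + ∑ q, |quasiCoeff G l q| + ∑ r, |semiCoeff H l r|)

variable {c : Fin N → ℝ} {G : Fin N → Fin N → Fin N → Fin 4 → Fin 4 → Fin 4 → ℝ}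
  {H : Fin N → Fin N → Fin N → Fin 4 → Fin 4 → ℝ} {T : ℝ}
  {u : Fin N → ℝ → Esp 3 → ℝ} {t : ℝ} {x : Esp 3}

lemma one_le_coeffBound : 1 ≤ coeffBound c G H :=
  le_add_of_nonneg_right (by positivity)

def epsStar (c : Fin N → ℝ)
    (G : Fin N → Fin N → Fin N → Fin 4 → Fin 4 → Fin 4 → ℝ)
    (H : Fin N → Fin N → Fin N → Fin 4 → Fin 4 → ℝ) : ℝ :=
  1 / (8 * coeffBound c G H)

lemma epsStar_pos : 0 < epsStar c G H := by
  have := one_le_coeffBound (c := c) (G := G) (H := H)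
  unfold epsStar
  positivity

lemma coeffBound_mul_epsStar : coeffBound c G H * epsStar c G H = 1 / 8 := by
  have := one_le_coeffBound (c := c) (G := G) (H := H)
  unfold epsStar
  field_simp

lemma epsStar_le : epsStar c G H ≤ 1 / 8 := by
  nlinarith [one_le_coeffBound (c := c) (G := G) (H := H), coeffBound_mul_epsStar (c := c) (G := G)
    (H := H), epsStar_pos (c := c) (G := G) (H := H)]

lemma JointSmoothOn.quasiTerm {Ω : Set (ℝ × Esp 3)} (hu : ∀ i, JointSmoothOn (u i) Ω)
    (hΩ : IsOpen Ω) (q : QuasiIdx N) : JointSmoothOn (quasiTerm u q) Ω := by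
  obtain ⟨i, j, α, β, γ⟩ := q
  exact ((hu i).pd' hΩ α).mul (((hu j).pd' hΩ γ).pd' hΩ β)

lemma JointSmoothOn.semiTerm {Ω : Set (ℝ × Esp 3)} (hu : ∀ i, JointSmoothOn (u i) Ω)
    (hΩ : IsOpen Ω) (r : SemiIdx N) : JointSmoothOn (semiTerm u r) Ω := by
  obtain ⟨i, j, α, β⟩ := r
  exact ((hu i).pd' hΩ α).mul ((hu j).pd' hΩ β)

lemma IsSol3.dt'_dt'_eq (hsol : IsSol3 c G H T u) (l : Fin N) (ht : t ∈ Ioo 0 T) :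
    dt' (dt' (u l)) t x = ∑ m, c l ^ 2 * dx' m (dx' m (u l)) t x
      + (∑ q, quasiCoeff G l q * quasiTerm u q t x
        + ∑ r, semiCoeff H l r * semiTerm u r t x) := by
  have h := hsol l t ht x
  simp only [boxOp] at h
  simp only [Fintype.sum_prod_type, quasiCoeff, quasiTerm, semiCoeff, semiTerm, ← mul_assoc,
    ← Finset.mul_sum]
  linarith

lemma zgs_dt'_dt'_eq (hsm : SmoothSTOn u (Ioo 0 T)) (hsol : IsSol3 c G H T u)
    (ht : t ∈ Ioo 0 T) (w : List (Generator 3)) (l : Fin N) :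
    zgs w (dt' (dt' (u l))) t x = ∑ m, c l ^ 2 * zgs w (dx' m (dx' m (u l))) t x
      + (∑ q, quasiCoeff G l q * zgs w (quasiTerm u q) t x
        + ∑ r, semiCoeff H l r * zgs w (semiTerm u r) t x) := by
  have hu : ∀ i, JointSmoothOn (u i) (Ioo 0 T ×ˢ univ) := hsm
  have hΩ : IsOpen (Ioo 0 T ×ˢ (univ : Set (Esp 3))) := isOpen_Ioo.prod isOpen_univ
  have hslice (y : Esp 3) : (t, y) ∈ Ioo 0 T ×ˢ (univ : Set (Esp 3)) := ⟨ht, trivial⟩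
  have hQ := JointSmoothOn.quasiTerm hu hΩ
  have hS := JointSmoothOn.semiTerm hu hΩ
  rw [zgs_congr w (g := fun t y => ∑ m, c l ^ 2 * dx' m (dx' m (u l)) t y
      + (∑ q, quasiCoeff G l q * quasiTerm u q t y + ∑ r, semiCoeff H l r * semiTerm u r t y))
      fun y => hsol.dt'_dt'_eq l ht,
    zgs_add (.sum_mul _ fun m => ((hu l).dx' hΩ m).dx' hΩ m)
      ((JointSmoothOn.sum_mul _ hQ).add (JointSmoothOn.sum_mul _ hS)) hΩ hslice,
    zgs_add (.sum_mul _ hQ) (.sum_mul _ hS) hΩ hslice,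
    zgs_sum_mul _ (fun m => ((hu l).dx' hΩ m).dx' hΩ m) hΩ hslice,
    zgs_sum_mul _ hQ hΩ hslice, zgs_sum_mul _ hS hΩ hslice]

lemma timeSecondOrderSum_le (hsm : SmoothSTOn u (Ioo 0 T)) (hsol : IsSol3 c G H T u)
    (ht : t ∈ Ioo 0 T) (w : List (Generator 3)) {M bQ bS : ℝ}
    (hM0 : 0 ≤ M) (hQ0 : 0 ≤ bQ) (hS0 : 0 ≤ bS)
    (hM : ∀ l m, |zgs w (dx' m (dx' m (u l))) t x| ≤ M)
    (hQ : ∀ q, |zgs w (quasiTerm u q) t x| ≤ bQ)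
    (hS : ∀ r, |zgs w (semiTerm u r) t x| ≤ bS) :
    timeSecondOrderSum u w t x ≤ coeffBound c G H * (3 * M + bQ + bS) := by
  have hl (l : Fin N) : |zgs w (dt' (dt' (u l))) t x|
      ≤ (c l ^ 2 + ∑ q, |quasiCoeff G l q| + ∑ r, |semiCoeff H l r|) * (3 * M + bQ + bS) := by
    have hlin := abs_sum_mul_le (fun _ => c l ^ 2) _ (hM l)
    simp only [Finset.sum_const, Finset.card_univ, Fintype.card_fin, abs_pow, sq_abs,
      nsmul_eq_mul, Nat.cast_ofNat] at hlin
    have hG0 : 0 ≤ ∑ q, |quasiCoeff G l q| := by positivity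
    have hH0 : 0 ≤ ∑ r, |semiCoeff H l r| := by positivity
    rw [zgs_dt'_dt'_eq hsm hsol ht w l]
    calc _ ≤ 3 * c l ^ 2 * M
          + ((∑ q, |quasiCoeff G l q|) * bQ + (∑ r, |semiCoeff H l r|) * bS) :=
          (abs_add_le _ _).trans (add_le_add hlin ((abs_add_le _ _).trans
            (add_le_add (abs_sum_mul_le _ _ hQ) (abs_sum_mul_le _ _ hS))))
      _ ≤ _ := by
        nlinarith [mul_nonneg (sq_nonneg (c l)) hQ0, mul_nonneg (sq_nonneg (c l)) hS0,
          mul_nonneg hG0 hM0, mul_nonneg hG0 hS0, mul_nonneg hH0 hM0, mul_nonneg hH0 hQ0]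
  calc timeSecondOrderSum u w t x
      ≤ ∑ l, (c l ^ 2 + ∑ q, |quasiCoeff G l q| + ∑ r, |semiCoeff H l r|)
          * (3 * M + bQ + bS) := Finset.sum_le_sum fun l _ => hl l
    _ ≤ _ := by
      rw [← Finset.sum_mul, coeffBound]
      gcongr
      exact le_add_of_nonneg_left zero_le_one

lemma abs_pd'_pd'_le_add (hsm : SmoothSTOn u (Ioo 0 T)) (ht : t ∈ Ioo 0 T) {ε : ℝ}
    (hε : 0 ≤ ε) (hsmall : IsSmallAt u t x ε) (j : Fin N) (β γ : Fin 4) :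
    |pd' β (pd' γ (u j)) t x| ≤ ε + timeSecondOrderSum u [] t x :=
  (abs_zgs_pd'_pd'_le (hsm.jointSmoothOn j) (isOpen_Ioo.prod isOpen_univ)
    (fun _ => ⟨ht, trivial⟩) [] β γ hε fun m α => hsmall.2 j α (.inl m)).trans
    (add_le_add_right (abs_le_timeSecondOrderSum j) _)

lemma timeSecondOrderSum_nil_le_one (hsm : SmoothSTOn u (Ioo 0 T)) (hsol : IsSol3 c G H T u)
    (ht : t ∈ Ioo 0 T) (hsmall : IsSmallAt u t x (epsStar c G H)) :
    timeSecondOrderSum u [] t x ≤ 1 := by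
  set ε := epsStar c G H
  set X := timeSecondOrderSum u [] t x
  have hε : 0 ≤ ε := epsStar_pos.le
  have hB := abs_pd'_pd'_le_add hsm ht hε hsmall
  have hX := timeSecondOrderSum_le hsm hsol ht [] (M := ε) (bQ := ε * (ε + X)) (bS := ε * ε)
    hε (mul_nonneg hε (add_nonneg hε (timeSecondOrderSum_nonneg u [] t x))) (mul_nonneg hε hε)
    (fun l m => hsmall.2 l m.succ (.inl m))
    (fun ⟨i, j, α, β, γ⟩ => by
      simpa only [zgs_nil, quasiTerm, abs_mul] using
        mul_le_mul (hsmall.1 i α) (hB j β γ) (abs_nonneg _) hε)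
    (fun ⟨i, j, α, β⟩ => by
      simpa only [zgs_nil, semiTerm, abs_mul] using
        mul_le_mul (hsmall.1 i α) (hsmall.1 j β) (abs_nonneg _) hε)
  have hexp : coeffBound c G H * (3 * ε + ε * (ε + X) + ε * ε)
      = (coeffBound c G H * ε) * (3 + 2 * ε + X) := by ring
  rw [hexp, coeffBound_mul_epsStar] at hX
  linarith [epsStar_le (c := c) (G := G) (H := H)]

lemma abs_pd'_pd'_le_two (hsm : SmoothSTOn u (Ioo 0 T)) (hsol : IsSol3 c G H T u)
    (ht : t ∈ Ioo 0 T) (hsmall : IsSmallAt u t x (epsStar c G H)) (j : Fin N) (β γ : Fin 4) :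
    |pd' β (pd' γ (u j)) t x| ≤ 2 := by
  linarith [abs_pd'_pd'_le_add hsm ht epsStar_pos.le hsmall j β γ,
    timeSecondOrderSum_nil_le_one hsm hsol ht hsmall, epsStar_le (c := c) (G := G) (H := H)]

lemma abs_zg_quasiTerm_le (hsm : SmoothSTOn u (Ioo 0 T)) (hsol : IsSol3 c G H T u)
    (ht : t ∈ Ioo 0 T) (hsmall : IsSmallAt u t x (epsStar c G H)) (a : Generator 3)
    (q : QuasiIdx N) :
    |zgs [a] (quasiTerm u q) t x| ≤ firstOrderSum u [a] t x * 2
      + epsStar c G H * (spatialSecondOrderSum u [a] t x + timeSecondOrderSum u [a] t x) := by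
  have hΩ : IsOpen (Ioo 0 T ×ˢ (univ : Set (Esp 3))) := isOpen_Ioo.prod isOpen_univ
  have hd {f : ℝ → Esp 3 → ℝ} (hf : JointSmoothOn f (Ioo 0 T ×ˢ univ)) :
      DifferentiableAt ℝ (fun y => f t y) x := hf.differentiableAt_slice hΩ ⟨ht, trivial⟩
  obtain ⟨i, j, α, β, γ⟩ := q
  exact (abs_zg_mul_le a (hd ((hsm.jointSmoothOn i).pd' hΩ α))
    (hd (((hsm.jointSmoothOn j).pd' hΩ γ).pd' hΩ β))).trans
    (add_le_add
      (mul_le_mul (abs_le_firstOrderSum (w := [a]) i α)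
        (abs_pd'_pd'_le_two hsm hsol ht hsmall j β γ)
        (abs_nonneg _) (firstOrderSum_nonneg u [a] t x))
      (mul_le_mul (hsmall.1 i α)
        (abs_zgs_pd'_pd'_le_sum (w := [a]) hsm hΩ (fun _ => ⟨ht, trivial⟩) j β γ)
        (abs_nonneg _) epsStar_pos.le))

lemma abs_zg_semiTerm_le (hsm : SmoothSTOn u (Ioo 0 T)) (ht : t ∈ Ioo 0 T) {ε : ℝ}
    (hε : 0 ≤ ε) (hsmall : IsSmallAt u t x ε) (a : Generator 3) (r : SemiIdx N) :
    |zgs [a] (semiTerm u r) t x|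
      ≤ firstOrderSum u [a] t x * ε + ε * firstOrderSum u [a] t x := by
  have hΩ : IsOpen (Ioo 0 T ×ˢ (univ : Set (Esp 3))) := isOpen_Ioo.prod isOpen_univ
  have hd {f : ℝ → Esp 3 → ℝ} (hf : JointSmoothOn f (Ioo 0 T ×ˢ univ)) :
      DifferentiableAt ℝ (fun y => f t y) x := hf.differentiableAt_slice hΩ ⟨ht, trivial⟩
  obtain ⟨i, j, α, β⟩ := r
  exact (abs_zg_mul_le a (hd ((hsm.jointSmoothOn i).pd' hΩ α))
    (hd ((hsm.jointSmoothOn j).pd' hΩ β))).trans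
    (add_le_add
      (mul_le_mul (abs_le_firstOrderSum (w := [a]) i α) (hsmall.1 j β) (abs_nonneg _)
        (firstOrderSum_nonneg u [a] t x))
      (mul_le_mul (hsmall.1 i α) (abs_le_firstOrderSum (w := [a]) j β) (abs_nonneg _) hε))

lemma timeSecondOrderSum_singleton_le (hsm : SmoothSTOn u (Ioo 0 T)) (hsol : IsSol3 c G H T u)
    (ht : t ∈ Ioo 0 T) (hsmall : IsSmallAt u t x (epsStar c G H)) (a : Generator 3) :
    timeSecondOrderSum u [a] t x
      ≤ 4 * coeffBound c G H * (firstOrderSum u [a] t x + spatialSecondOrderSum u [a] t x) := by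
  set K := coeffBound c G H
  set ε := epsStar c G H
  set T1 := firstOrderSum u [a] t x
  set T2 := spatialSecondOrderSum u [a] t x
  set X := timeSecondOrderSum u [a] t x
  have hT1 : 0 ≤ T1 := firstOrderSum_nonneg u [a] t x
  have hT2 : 0 ≤ T2 := spatialSecondOrderSum_nonneg u [a] t x
  have hX : 0 ≤ X := timeSecondOrderSum_nonneg u [a] t x
  have hε : 0 ≤ ε := epsStar_pos.le
  have hK1 : 1 ≤ K := one_le_coeffBound
  have hXle := timeSecondOrderSum_le hsm hsol ht [a] (M := T2) (bQ := T1 * 2 + ε * (T2 + X))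
    (bS := T1 * ε + ε * T1) hT2 (by positivity) (by positivity)
    (fun l m => abs_le_spatialSecondOrderSum l m m.succ)
    (abs_zg_quasiTerm_le hsm hsol ht hsmall a) (abs_zg_semiTerm_le hsm ht hε hsmall a)
  have hexp : K * (3 * T2 + (T1 * 2 + ε * (T2 + X)) + (T1 * ε + ε * T1))
      = 3 * (K * T2) + 2 * (K * T1) + (K * ε) * (T2 + X + 2 * T1) := by ring
  rw [hexp, coeffBound_mul_epsStar] at hXle
  nlinarith

lemma abs_zg_zg_quasiTerm_le (hsm : SmoothSTOn u (Ioo 0 T)) (hsol : IsSol3 c G H T u)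
    (ht : t ∈ Ioo 0 T) (hsmall : IsSmallAt u t x (epsStar c G H))
    (a b : Generator 3) (q : QuasiIdx N) :
    |zgs [a, b] (quasiTerm u q) t x| ≤ firstOrderSum u [a, b] t x * 2
      + epsStar c G H * (spatialSecondOrderSum u [a] t x + timeSecondOrderSum u [a] t x)
      + (epsStar c G H * (spatialSecondOrderSum u [b] t x + timeSecondOrderSum u [b] t x)
        + epsStar c G H
          * (spatialSecondOrderSum u [a, b] t x + timeSecondOrderSum u [a, b] t x)) := by
  have hΩ : IsOpen (Ioo 0 T ×ˢ (univ : Set (Esp 3))) := isOpen_Ioo.prod isOpen_univ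
  have hslice (y : Esp 3) : (t, y) ∈ Ioo 0 T ×ˢ (univ : Set (Esp 3)) := ⟨ht, trivial⟩
  have hε : 0 ≤ epsStar c G H := epsStar_pos.le
  obtain ⟨i, j, α, β, γ⟩ := q
  exact (abs_zg_zg_mul_le ((hsm.jointSmoothOn i).pd' hΩ α)
    (((hsm.jointSmoothOn j).pd' hΩ γ).pd' hΩ β) hΩ hslice a b).trans
    (add_le_add
      (add_le_add
        (mul_le_mul (abs_le_firstOrderSum (w := [a, b]) i α)
          (abs_pd'_pd'_le_two hsm hsol ht hsmall j β γ) (abs_nonneg _)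
          (firstOrderSum_nonneg u [a, b] t x))
        (mul_le_mul (hsmall.2 i α b) (abs_zgs_pd'_pd'_le_sum (w := [a]) hsm hΩ hslice j β γ)
          (abs_nonneg _) hε))
      (add_le_add
        (mul_le_mul (hsmall.2 i α a) (abs_zgs_pd'_pd'_le_sum (w := [b]) hsm hΩ hslice j β γ)
          (abs_nonneg _) hε)
        (mul_le_mul (hsmall.1 i α) (abs_zgs_pd'_pd'_le_sum (w := [a, b]) hsm hΩ hslice j β γ)
          (abs_nonneg _) hε)))

lemma abs_zg_zg_semiTerm_le (hsm : SmoothSTOn u (Ioo 0 T)) (ht : t ∈ Ioo 0 T) {ε : ℝ}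
    (hε : 0 ≤ ε) (hsmall : IsSmallAt u t x ε) (a b : Generator 3) (r : SemiIdx N) :
    |zgs [a, b] (semiTerm u r) t x| ≤ firstOrderSum u [a, b] t x * ε
      + ε * firstOrderSum u [a] t x
      + (ε * firstOrderSum u [b] t x + ε * firstOrderSum u [a, b] t x) := by
  have hΩ : IsOpen (Ioo 0 T ×ˢ (univ : Set (Esp 3))) := isOpen_Ioo.prod isOpen_univ
  obtain ⟨i, j, α, β⟩ := r
  exact (abs_zg_zg_mul_le ((hsm.jointSmoothOn i).pd' hΩ α) ((hsm.jointSmoothOn j).pd' hΩ β) hΩ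
    (fun _ => ⟨ht, trivial⟩) a b).trans
    (add_le_add
      (add_le_add
        (mul_le_mul (abs_le_firstOrderSum (w := [a, b]) i α) (hsmall.1 j β) (abs_nonneg _)
          (firstOrderSum_nonneg u [a, b] t x))
        (mul_le_mul (hsmall.2 i α b) (abs_le_firstOrderSum (w := [a]) j β) (abs_nonneg _) hε))
      (add_le_add
        (mul_le_mul (hsmall.2 i α a) (abs_le_firstOrderSum (w := [b]) j β) (abs_nonneg _) hε)
        (mul_le_mul (hsmall.1 i α) (abs_le_firstOrderSum (w := [a, b]) j β) (abs_nonneg _) hε)))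

lemma timeSecondOrderSum_pair_le (hsm : SmoothSTOn u (Ioo 0 T)) (hsol : IsSol3 c G H T u)
    (ht : t ∈ Ioo 0 T) (hsmall : IsSmallAt u t x (epsStar c G H))
    (a b : Generator 3) :
    timeSecondOrderSum u [a, b] t x
      ≤ 4 * coeffBound c G H * (firstOrderSum u [a, b] t x + spatialSecondOrderSum u [a, b] t x)
        + coeffBound c G H * (firstOrderSum u [a] t x + spatialSecondOrderSum u [a] t x
          + (firstOrderSum u [b] t x + spatialSecondOrderSum u [b] t x)) := by
  set K := coeffBound c G H
  set ε := epsStar c G H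
  set U1 := firstOrderSum u [a, b] t x
  set U2 := spatialSecondOrderSum u [a, b] t x
  set Y := timeSecondOrderSum u [a, b] t x
  set T1a := firstOrderSum u [a] t x
  set T2a := spatialSecondOrderSum u [a] t x
  set Xa := timeSecondOrderSum u [a] t x
  set T1b := firstOrderSum u [b] t x
  set T2b := spatialSecondOrderSum u [b] t x
  set Xb := timeSecondOrderSum u [b] t x
  have := firstOrderSum_nonneg u [a, b] t x
  have := spatialSecondOrderSum_nonneg u [a, b] t x
  have := timeSecondOrderSum_nonneg u [a, b] t x
  have := firstOrderSum_nonneg u [a] t x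
  have := spatialSecondOrderSum_nonneg u [a] t x
  have := timeSecondOrderSum_nonneg u [a] t x
  have := firstOrderSum_nonneg u [b] t x
  have := spatialSecondOrderSum_nonneg u [b] t x
  have := timeSecondOrderSum_nonneg u [b] t x
  have hε : 0 ≤ ε := epsStar_pos.le
  have hK1 : 1 ≤ K := one_le_coeffBound
  have hXa := timeSecondOrderSum_singleton_le hsm hsol ht hsmall a
  have hXb := timeSecondOrderSum_singleton_le hsm hsol ht hsmall b
  have hYle := timeSecondOrderSum_le hsm hsol ht [a, b] (M := U2)
    (bQ := U1 * 2 + ε * (T2a + Xa) + (ε * (T2b + Xb) + ε * (U2 + Y)))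
    (bS := U1 * ε + ε * T1a + (ε * T1b + ε * U1)) (by positivity) (by positivity)
    (by positivity)
    (fun l m => abs_le_spatialSecondOrderSum l m m.succ)
    (abs_zg_zg_quasiTerm_le hsm hsol ht hsmall a b) (abs_zg_zg_semiTerm_le hsm ht hε hsmall a b)
  have hexp : K * (3 * U2 + (U1 * 2 + ε * (T2a + Xa) + (ε * (T2b + Xb) + ε * (U2 + Y)))
        + (U1 * ε + ε * T1a + (ε * T1b + ε * U1)))
      = 3 * (K * U2) + 2 * (K * U1)
        + (K * ε) * (T2a + Xa + T2b + Xb + U2 + Y + 2 * U1 + T1a + T1b) := by ring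
  rw [hexp, coeffBound_mul_epsStar] at hYle
  nlinarith

end System

section Rearrangement

variable {n N : ℕ} {u : Fin N → ℝ → Esp n → ℝ} {t : ℝ} {x : Esp n}

lemma sum_le_sum_sum {ι κ : Type*} [Fintype ι] [Fintype κ] {F : ι → κ → ℝ}
    (hF : ∀ i k, 0 ≤ F i k) (k : κ) : ∑ i, F i k ≤ ∑ i, ∑ k, F i k :=
  Finset.sum_le_sum fun i _ => Finset.single_le_sum (fun k _ => hF i k) (Finset.mem_univ k)

lemma firstOrderSum_add_spatialSecondOrderSum_le (a : Generator n) :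
    firstOrderSum u [a] t x + spatialSecondOrderSum u [a] t x
      ≤ ∑ i, ∑ g : Generator n,
          ((∑ m : Fin n, ∑ α : Fin (n + 1), |zg g (dx' m (pd' α (u i))) t x|)
            + ∑ α : Fin (n + 1), |zg g (pd' α (u i)) t x|) := by
  simp only [firstOrderSum, spatialSecondOrderSum, zgs_cons, zgs_nil]
  rw [add_comm, ← Finset.sum_add_distrib]
  exact sum_le_sum_sum (F := fun i g => (∑ m : Fin n, ∑ α : Fin (n + 1),
    |zg g (dx' m (pd' α (u i))) t x|) + ∑ α : Fin (n + 1), |zg g (pd' α (u i)) t x|)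
    (fun _ _ => by positivity) a

lemma firstOrderSum_add_spatialSecondOrderSum_pair_le (a b : Generator n) :
    firstOrderSum u [a, b] t x + spatialSecondOrderSum u [a, b] t x
      ≤ ∑ i, ∑ g : Generator n, ∑ g' : Generator n,
          ((∑ m : Fin n, ∑ α : Fin (n + 1), |zg g (zg g' (dx' m (pd' α (u i)))) t x|)
            + ∑ α : Fin (n + 1), |zg g (zg g' (pd' α (u i))) t x|) := by
  simp only [firstOrderSum, spatialSecondOrderSum, zgs_cons, zgs_nil]
  rw [add_comm, ← Finset.sum_add_distrib]
  set F := fun i g g' => (∑ m : Fin n, ∑ α : Fin (n + 1),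
    |zg g (zg g' (dx' m (pd' α (u i)))) t x|)
      + ∑ α : Fin (n + 1), |zg g (zg g' (pd' α (u i))) t x|
  exact (sum_le_sum_sum (F := fun i g' => F i a g') (fun _ _ => by positivity) b).trans
    (sum_le_sum_sum (F := fun i g => ∑ g', F i g g') (fun _ _ => by positivity) a)

end Rearrangement

/-- under the same smallness condition as in Statement 11, for
every multi-index a with |a| ∈ {1,2} (expressed via one or two generators
from Z̄ = {∂_m, Ω_{ij}}),
Σ_i |Z̄^a ∂_t² u^i| ≤ C Σ_i Σ_{1≤|b|≤|a|} (Σ_{m,α} |Z̄^b ∂_m∂_α u^i| + Σ_α |Z̄^b ∂_α u^i|). -/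
theorem stmt_12 :
    ∀ (N : ℕ) (c : Fin N → ℝ)
      (G : Fin N → Fin N → Fin N → Fin 4 → Fin 4 → Fin 4 → ℝ)
      (H : Fin N → Fin N → Fin N → Fin 4 → Fin 4 → ℝ),
      (∀ l, 0 < c l) →
      ∃ εs > (0 : ℝ), ∃ C > (0 : ℝ),
        ∀ (T : ℝ) (u : Fin N → ℝ → Esp 3 → ℝ),
          SmoothSTOn u (Ioo 0 T) → IsSol3 c G H T u →
          ∀ t ∈ Ioo (0 : ℝ) T, ∀ x : Esp 3,
            ((∀ (i : Fin N) (α : Fin 4), |pd' α (u i) t x| ≤ εs) ∧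
             (∀ (i : Fin N) (α : Fin 4) (g : Fin 3 ⊕ (Fin 3 × Fin 3)),
               |zg g (pd' α (u i)) t x| ≤ εs)) →
            (∀ g₁ : Fin 3 ⊕ (Fin 3 × Fin 3),
              (∑ i, |zg g₁ (dt' (dt' (u i))) t x|)
                ≤ C * ∑ i, ∑ g : Fin 3 ⊕ (Fin 3 × Fin 3),
                    ((∑ m : Fin 3, ∑ α : Fin 4, |zg g (dx' m (pd' α (u i))) t x|)
                      + ∑ α : Fin 4, |zg g (pd' α (u i)) t x|)) ∧
            (∀ g₁ g₂ : Fin 3 ⊕ (Fin 3 × Fin 3),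
              (∑ i, |zg g₁ (zg g₂ (dt' (dt' (u i)))) t x|)
                ≤ C * ∑ i,
                    ((∑ g : Fin 3 ⊕ (Fin 3 × Fin 3),
                        ((∑ m : Fin 3, ∑ α : Fin 4, |zg g (dx' m (pd' α (u i))) t x|)
                          + ∑ α : Fin 4, |zg g (pd' α (u i)) t x|))
                     + ∑ g : Fin 3 ⊕ (Fin 3 × Fin 3), ∑ g' : Fin 3 ⊕ (Fin 3 × Fin 3),
                        ((∑ m : Fin 3, ∑ α : Fin 4,
                            |zg g (zg g' (dx' m (pd' α (u i)))) t x|)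
                          + ∑ α : Fin 4, |zg g (zg g' (pd' α (u i))) t x|))) := by
  intro N c G H _
  set K := coeffBound c G H
  have hK : 0 < K := zero_lt_one.trans_le one_le_coeffBound
  refine ⟨epsStar c G H, epsStar_pos, 4 * K, by positivity, ?_⟩
  intro T u hsm hsol t ht x hsmall
  have hR1 (a) := firstOrderSum_add_spatialSecondOrderSum_le (u := u) (t := t) (x := x) a
  refine ⟨fun a => (timeSecondOrderSum_singleton_le hsm hsol ht hsmall a).trans
    (mul_le_mul_of_nonneg_left (hR1 a) (by positivity)), fun a b => ?_⟩
  rw [Finset.sum_add_distrib]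
  set R1 := ∑ i, ∑ g : Generator 3,
    ((∑ m : Fin 3, ∑ α : Fin 4, |zg g (dx' m (pd' α (u i))) t x|)
      + ∑ α : Fin 4, |zg g (pd' α (u i)) t x|)
  set R2 := ∑ i, ∑ g : Generator 3, ∑ g' : Generator 3,
    ((∑ m : Fin 3, ∑ α : Fin 4, |zg g (zg g' (dx' m (pd' α (u i)))) t x|)
      + ∑ α : Fin 4, |zg g (zg g' (pd' α (u i))) t x|)
  have hR1nonneg : 0 ≤ R1 := by positivity
  calc _ ≤ 4 * K * (firstOrderSum u [a, b] t x + spatialSecondOrderSum u [a, b] t x)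
        + K * (firstOrderSum u [a] t x + spatialSecondOrderSum u [a] t x
          + (firstOrderSum u [b] t x + spatialSecondOrderSum u [b] t x)) :=
        timeSecondOrderSum_pair_le hsm hsol ht hsmall a b
    _ ≤ 4 * K * R2 + K * (R1 + R1) := by
      gcongr
      · exact firstOrderSum_add_spatialSecondOrderSum_pair_le a b
      · exact hR1 a
      · exact hR1 b
    _ ≤ 4 * K * (R1 + R2) := by nlinarith
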